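/- arXiv:1809.00739 — 9 statements merged into one kernel-verified Lean document; each statement's English description precedes it below -/
import Mathlib

section
/- Let G be a (P6, diamond)-free graph containing an induced 5-cycle v1v2v3v4v5, and for each i let A_i be the set of vertices outside the cycle whose only neighbour on the cycle is v_i. Then A_i and A_{i+1} are anti-complete (no edges between them), indices modulo 5. -/
open SimpleGraph

def diamond : SimpleGraph (Fin 4) := (⊤ : SimpleGraph (Fin 4)).deleteEdges {s(0, 1)}

/-!
Rotating the cycle we may take `i = 0`. Then `v 2, v 3, v 4, v 0, a, b` is an induced path on six
vertices whenever `a` and `b` are adjacent, since `a` sees only `v 0` and `b` sees only `v 1` on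
the cycle. The six vertices are automatically distinct: a map that preserves and reflects
adjacency is injective on a graph in which no two vertices have the same neighbourhood, as in `P6`.
-/

namespace SimpleGraph

variable {V W : Type*} {G : SimpleGraph V} {H : SimpleGraph W}

def Embedding.ofAdjIff (hH : ∀ x y, (∀ z, H.Adj x z ↔ H.Adj y z) → x = y) (f : W → V)
    (hf : ∀ x y, G.Adj (f x) (f y) ↔ H.Adj x y) : H ↪g G where
  toFun := f
  inj' x y hxy := hH x y fun z => by rw [← hf, ← hf, hxy]
  map_rel_iff' := hf _ _

theorem pathGraph_six_eq_of_forall_adj_iff :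
    ∀ x y : Fin 6, (∀ z, (pathGraph 6).Adj x z ↔ (pathGraph 6).Adj y z) → x = y := by
  simp only [pathGraph_adj]
  decide

theorem not_adj_of_forall_adj_cycle_iff (hP6 : ¬ Nonempty (pathGraph 6 ↪g G)) (v : Fin 5 → V)
    (hC5 : ∀ i j, G.Adj (v i) (v j) ↔ j = i + 1 ∨ i = j + 1) {a b : V}
    (ha : ∀ j, G.Adj a (v j) ↔ j = 0) (hb : ∀ j, G.Adj b (v j) ↔ j = 1) : ¬ G.Adj a b := by
  intro hab
  have ha' (j : Fin 5) : G.Adj (v j) a ↔ j = 0 := G.adj_comm _ _ |>.trans (ha j)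
  have hb' (j : Fin 5) : G.Adj (v j) b ↔ j = 1 := G.adj_comm _ _ |>.trans (hb j)
  refine hP6 ⟨Embedding.ofAdjIff pathGraph_six_eq_of_forall_adj_iff
    ![v 2, v 3, v 4, v 0, a, b] fun x y => ?_⟩
  fin_cases x <;> fin_cases y <;> simp [hC5, ha, hb, ha', hb', hab, hab.symm, pathGraph_adj]

end SimpleGraph

theorem stmt_2_general {V : Type*} (G : SimpleGraph V)
    (hP6 : ¬ Nonempty (pathGraph 6 ↪g G))
    (v : Fin 5 → V)
    (hC5 : ∀ i j, G.Adj (v i) (v j) ↔ j = i + 1 ∨ i = j + 1)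
    (A : Fin 5 → Set V)
    (hA : ∀ i, A i = {u | u ∉ Set.range v ∧ ∀ j, G.Adj u (v j) ↔ j = i}) :
    ∀ i, ∀ a ∈ A i, ∀ b ∈ A (i + 1), ¬ G.Adj a b := by
  intro i a ha b hb
  rw [hA] at ha hb
  refine not_adj_of_forall_adj_cycle_iff hP6 (fun j => v (i + j)) (fun j k => ?_)
    (fun j => ?_) (fun j => ?_)
  · simp only [hC5, add_assoc, add_right_inj]
  · simp only [ha.2, add_eq_left]
  · simp only [hb.2, add_right_inj]

theorem stmt_2 {V : Type*} (G : SimpleGraph V)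
    (hP6 : ¬ Nonempty (pathGraph 6 ↪g G))
    (hD : ¬ Nonempty (diamond ↪g G))
    (v : Fin 5 → V) (hv : Function.Injective v)
    (hC5 : ∀ i j, G.Adj (v i) (v j) ↔ j = i + 1 ∨ i = j + 1)
    (A : Fin 5 → Set V)
    (hA : ∀ i, A i = {u | u ∉ Set.range v ∧ ∀ j, G.Adj u (v j) ↔ j = i}) :
    ∀ i, ∀ a ∈ A i, ∀ b ∈ A (i + 1), ¬ G.Adj a b :=
  stmt_2_general G hP6 v hC5 A hA
end

section
/- Let G be a diamond-free graph containing an induced 5-cycle v1v2v3v4v5, with B_{i,i+1} the set of vertices outside the cycle adjacent on the cycle exactly to v_i and v_{i+1}, and A_i the set of vertices outside the cycle adjacent on the cycle only to v_i. Then B_{i,i+1} is anti-complete to A_i ∪ A_{i+1}. -/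
open SimpleGraph

/-- Two non-adjacent common neighbours of an edge `yz` span a diamond with it. -/
theorem SimpleGraph.isClique_commonNeighbors_of_diamond_free {V : Type*} {G : SimpleGraph V}
    (hD : ¬ Nonempty (diamond ↪g G)) {y z : V} (hyz : G.Adj y z) :
    G.IsClique (G.commonNeighbors y z) := by
  intro w hw x hx hwx
  rw [mem_commonNeighbors] at hw hx
  obtain ⟨hyw, hzw⟩ := hw
  obtain ⟨hyx, hzx⟩ := hx
  by_contra hnwx
  refine hD ⟨⟨![w, x, y, z], ?_⟩, ?_⟩
  · intro a b hab
    fin_cases a <;> fin_cases b <;>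
      simp_all [hyw.ne, hzw.ne, hyx.ne, hzx.ne, hyz.ne, eq_comm]
  · intro a b
    change G.Adj (![w, x, y, z] a) (![w, x, y, z] b) ↔ _
    fin_cases a <;> fin_cases b <;>
      simp [diamond, G.adj_comm, *]

theorem stmt_6_general {V : Type*} (G : SimpleGraph V)
    (hD : ¬ Nonempty (diamond ↪g G))
    (v : Fin 5 → V)
    (hC5 : ∀ i j, G.Adj (v i) (v j) ↔ j = i + 1 ∨ i = j + 1)
    (A : Fin 5 → Set V)
    (hA : ∀ i, A i = {u | u ∉ Set.range v ∧ ∀ j, G.Adj u (v j) ↔ j = i})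
    (B : Fin 5 → Set V)
    (hB : ∀ i, B i = {u | u ∉ Set.range v ∧ ∀ j, G.Adj u (v j) ↔ (j = i ∨ j = i + 1)}) :
    ∀ i, ∀ b ∈ B i, ∀ a ∈ A i ∪ A (i + 1), ¬ G.Adj b a := by
  intro i b hb a ha hba
  rw [hB] at hb
  have hbi : G.Adj b (v i) := (hb.2 i).2 (Or.inl rfl)
  have hbi' : G.Adj b (v (i + 1)) := (hb.2 (i + 1)).2 (Or.inr rfl)
  have hii' : G.Adj (v i) (v (i + 1)) := (hC5 i (i + 1)).2 (Or.inl rfl)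
  have hne : i + 1 ≠ i := by omega
  rcases ha with ha | ha <;> rw [hA] at ha <;> obtain ⟨har, haj⟩ := ha
  · have ha' : a ∈ G.commonNeighbors b (v i) := ⟨hba, ((haj i).2 rfl).symm⟩
    have hi' : v (i + 1) ∈ G.commonNeighbors b (v i) := ⟨hbi', hii'⟩
    have := isClique_commonNeighbors_of_diamond_free hD hbi ha' hi' (fun h => har ⟨i + 1, h.symm⟩)
    exact hne ((haj (i + 1)).1 this)
  · have ha' : a ∈ G.commonNeighbors b (v (i + 1)) := ⟨hba, ((haj (i + 1)).2 rfl).symm⟩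
    have hi : v i ∈ G.commonNeighbors b (v (i + 1)) := ⟨hbi, hii'.symm⟩
    have := isClique_commonNeighbors_of_diamond_free hD hbi' ha' hi (fun h => har ⟨i, h.symm⟩)
    exact hne ((haj i).1 this).symm

theorem stmt_6 {V : Type*} (G : SimpleGraph V)
    (hD : ¬ Nonempty (diamond ↪g G))
    (v : Fin 5 → V) (hv : Function.Injective v)
    (hC5 : ∀ i j, G.Adj (v i) (v j) ↔ j = i + 1 ∨ i = j + 1)
    (A : Fin 5 → Set V)
    (hA : ∀ i, A i = {u | u ∉ Set.range v ∧ ∀ j, G.Adj u (v j) ↔ j = i})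
    (B : Fin 5 → Set V)
    (hB : ∀ i, B i = {u | u ∉ Set.range v ∧ ∀ j, G.Adj u (v j) ↔ (j = i ∨ j = i + 1)}) :
    ∀ i, ∀ b ∈ B i, ∀ a ∈ A i ∪ A (i + 1), ¬ G.Adj b a :=
  stmt_6_general G hD v hC5 A hA B hB
end

section
/- Let G be a diamond-free graph containing an induced 5-cycle v1v2v3v4v5, let C_{i,i+2} be the vertices outside the cycle adjacent on the cycle exactly to v_i and v_{i+2}, and A_i the vertices adjacent only to v_i. Then every vertex of C_{i,i+2} is either complete or anti-complete to each connected component of the subgraph induced by A_i. -/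
open SimpleGraph

lemma no_diamond_aux {V : Type*} (G : SimpleGraph V)
    (hD : ¬ Nonempty (diamond ↪g G)) (w c a₁ a₂ : V)
    (hwc : G.Adj w c) (hwa₁ : G.Adj w a₁) (hwa₂ : G.Adj w a₂)
    (ha : G.Adj a₁ a₂) (hca₁ : G.Adj c a₁) (hca₂ : ¬ G.Adj c a₂)
    (hne : c ≠ a₂) : False := by
  apply hD
  refine ⟨⟨⟨![c, a₂, w, a₁], ?_⟩, ?_⟩⟩
  · have h1 : c ≠ a₁ := hca₁.ne
    have h2 : c ≠ w := hwc.ne.symm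
    have h3 : a₂ ≠ w := hwa₂.ne.symm
    have h4 : a₂ ≠ a₁ := ha.ne.symm
    have h5 : w ≠ a₁ := hwa₁.ne
    intro x y
    fin_cases x <;> fin_cases y <;> simp_all <;> intro h <;>
      first
        | exact hne h | exact h1 h | exact h2 h | exact h3 h | exact h4 h | exact h5 h
        | exact hne h.symm | exact h1 h.symm | exact h2 h.symm | exact h3 h.symm
        | exact h4 h.symm | exact h5 h.symm
  · intro x y
    have := G.irrefl (v := c); have := G.irrefl (v := a₂)
    have := G.irrefl (v := w); have := G.irrefl (v := a₁)
    fin_cases x <;> fin_cases y <;>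
      simp [diamond, hwc, hwa₁, hwa₂, ha, hca₁, hca₂, hwc.symm, hwa₁.symm, hwa₂.symm,
        ha.symm, hca₁.symm, fun h => hca₂ (G.adj_symm h), Sym2.eq, Sym2.rel_iff'] <;>
      first
        | exact G.irrefl | exact hca₂ | exact fun h => hca₂ h.symm | trivial
        | exact hwc | exact hwa₁ | exact hwa₂ | exact ha | exact hca₁
        | exact hwc.symm | exact hwa₁.symm | exact hwa₂.symm | exact ha.symm | exact hca₁.symm

theorem stmt_9 {V : Type*} (G : SimpleGraph V)
    (hD : ¬ Nonempty (diamond ↪g G))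
    (v : Fin 5 → V) (hv : Function.Injective v)
    (hC5 : ∀ i j, G.Adj (v i) (v j) ↔ j = i + 1 ∨ i = j + 1)
    (A : Fin 5 → Set V)
    (hA : ∀ i, A i = {u | u ∉ Set.range v ∧ ∀ j, G.Adj u (v j) ↔ j = i})
    (C : Fin 5 → Set V)
    (hC : ∀ i, C i = {u | u ∉ Set.range v ∧ ∀ j, G.Adj u (v j) ↔ (j = i ∨ j = i + 2)}) :
    ∀ i, ∀ c ∈ C i, ∀ (a₁ : V) (h₁ : a₁ ∈ A i) (a₂ : V) (h₂ : a₂ ∈ A i),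
      (G.induce (A i)).Reachable ⟨a₁, h₁⟩ ⟨a₂, h₂⟩ → (G.Adj c a₁ ↔ G.Adj c a₂) := by
  intro i c hc
  rw [hC i] at hc
  -- facts about c
  have hcvi : G.Adj c (v i) := (hc.2 i).mpr (Or.inl rfl)
  have hcvi2 : G.Adj c (v (i + 2)) := (hc.2 (i + 2)).mpr (Or.inr rfl)
  -- one-step lemma
  have step : ∀ x y : V, x ∈ A i → y ∈ A i → G.Adj x y → G.Adj c x → G.Adj c y := by
    intro x y hx hy hxy hcx
    rw [hA i] at hx hy
    by_contra hcy
    have hcney : c ≠ y := by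
      intro h
      subst h
      have h0 := (hy.2 (i + 2)).mp hcvi2
      have h2 : i + 2 = i + 0 := by simpa using h0
      exact absurd (add_left_cancel h2) (by decide)
    exact no_diamond_aux G hD (v i) c x y hcvi.symm
      ((hx.2 i).mpr rfl).symm ((hy.2 i).mpr rfl).symm hxy hcx hcy hcney
  suffices H : ∀ x y : ↥(A i), (G.induce (A i)).Walk x y → (G.Adj c x ↔ G.Adj c y) by
    intro a₁ h₁ a₂ h₂ hr
    exact H _ _ hr.some
  intro x y w
  induction w with
  | nil => rfl
  | @cons x y z hxy w ih =>
      have hxy' : G.Adj (x : V) (y : V) := hxy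
      exact Iff.trans ⟨fun h => step x y x.2 y.2 hxy' h,
        fun h => step y x y.2 x.2 hxy'.symm h⟩ ih
end

section
/- Let G be a diamond-free graph containing an induced 5-cycle v1v2v3v4v5, and let F_i be the set of vertices outside the cycle whose neighbourhood on the cycle is exactly {v_i, v_{i-2}, v_{i+2}}. Then each F_i contains at most one vertex, and F = F_1 ∪ ... ∪ F_5 is a stable set. -/
open SimpleGraph
/-!
In a diamond-free graph the two diagonals of any 4-cycle are either both edges or both
non-edges. Two vertices of `F` sharing the non-adjacent cycle vertices `v i`, `v (i + 2)` are
therefore non-adjacent; two distinct vertices of `F i` also share the adjacent pair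
`v (i + 2)`, `v (i + 3)`, so they would have to be adjacent as well. For `x ∈ F i` and
`y ∈ F (i + 1)`, an edge `xy` closes the 4-cycle `y x v(i+2) v(i+3)` whose diagonal
`x v(i+3)` is an edge but `y v(i+2)` is not. The remaining index differences reduce to these
cases.
-/

namespace SimpleGraph

variable {V : Type*} {G : SimpleGraph V}

lemma nonempty_diamond_embedding {a b c d : V} (hab : a ≠ b) (hnab : ¬ G.Adj a b)
    (hac : G.Adj a c) (had : G.Adj a d) (hbc : G.Adj b c) (hbd : G.Adj b d) (hcd : G.Adj c d) :
    Nonempty (diamond ↪g G) := by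
  have := hac.ne; have := had.ne; have := hbc.ne; have := hbd.ne; have := hcd.ne
  have := hac.symm; have := had.symm; have := hbc.symm; have := hbd.symm; have := hcd.symm
  have hnba : ¬ G.Adj b a := fun h => hnab h.symm
  refine ⟨⟨⟨![a, b, c, d], fun i j h => ?_⟩, fun {i j} => ?_⟩⟩
  · fin_cases i <;> fin_cases j <;> simp_all
  · change G.Adj (![a, b, c, d] i) (![a, b, c, d] j) ↔ _
    fin_cases i <;> fin_cases j <;> simp_all [diamond, Sym2.eq]

lemma adj_iff_adj_of_diamond_free (hD : ¬ Nonempty (diamond ↪g G)) {a b c d : V}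
    (hab : a ≠ b) (hcd : c ≠ d) (hac : G.Adj a c) (had : G.Adj a d) (hbc : G.Adj b c)
    (hbd : G.Adj b d) : G.Adj a b ↔ G.Adj c d := by
  constructor
  · intro hadj
    by_contra hnadj
    exact hD (nonempty_diamond_embedding hcd hnadj hac.symm hbc.symm had.symm hbd.symm hadj)
  · intro hadj
    by_contra hnadj
    exact hD (nonempty_diamond_embedding hab hnadj hac had hbc hbd hadj)

section FiveCycle

variable (hD : ¬ Nonempty (diamond ↪g G)) {v : Fin 5 → V}
  (hC5 : ∀ i j, G.Adj (v i) (v j) ↔ j = i + 1 ∨ i = j + 1)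
include hD hC5

lemma not_adj_of_adj_cycle_two_apart (hv : Function.Injective v) {x y : V} {i : Fin 5}
    (hx : G.Adj x (v i)) (hx' : G.Adj x (v (i + 2))) (hy : G.Adj y (v i))
    (hy' : G.Adj y (v (i + 2))) : ¬ G.Adj x y := by
  rcases eq_or_ne x y with rfl | hxy
  · exact G.irrefl
  rw [adj_iff_adj_of_diamond_free hD hxy (hv.ne (by omega)) hx hx' hy hy', hC5]
  omega

lemma adj_of_adj_cycle_consecutive {x y : V} {i : Fin 5} (hxy : x ≠ y)
    (hx : G.Adj x (v i)) (hx' : G.Adj x (v (i + 1))) (hy : G.Adj y (v i))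
    (hy' : G.Adj y (v (i + 1))) : G.Adj x y := by
  rw [adj_iff_adj_of_diamond_free hD hxy ((hC5 i (i + 1)).2 (by omega)).ne hx hx' hy hy', hC5]
  omega

lemma not_adj_of_adj_cycle_consecutive {x y : V} {i : Fin 5} (hyv : y ≠ v i)
    (hx : G.Adj x (v i)) (hx' : G.Adj x (v (i + 1))) (hny : ¬ G.Adj y (v i))
    (hy' : G.Adj y (v (i + 1))) : ¬ G.Adj x y := fun hxy =>
  hny <| (adj_iff_adj_of_diamond_free hD hyv hx'.ne hxy.symm hy' hx.symm
    ((hC5 _ _).2 (by omega))).2 hx'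

end FiveCycle

end SimpleGraph

theorem stmt_12 {V : Type*} (G : SimpleGraph V)
    (hD : ¬ Nonempty (diamond ↪g G))
    (v : Fin 5 → V) (hv : Function.Injective v)
    (hC5 : ∀ i j, G.Adj (v i) (v j) ↔ j = i + 1 ∨ i = j + 1)
    (F : Fin 5 → Set V)
    (hF : ∀ i, F i = {u | u ∉ Set.range v ∧ ∀ j, G.Adj u (v j) ↔ (j = i ∨ j = i - 2 ∨ j = i + 2)}) :
    (∀ i, (F i).Subsingleton) ∧
      (∀ i j, ∀ x ∈ F i, ∀ y ∈ F j, ¬ G.Adj x y) := by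
  have adj : ∀ {i x}, x ∈ F i → ∀ {j}, (j = i ∨ j = i - 2 ∨ j = i + 2) → G.Adj x (v j) :=
    fun hx j hj => by rw [hF] at hx; exact (hx.2 j).2 hj
  have nadj : ∀ {i x}, x ∈ F i → ∀ {j}, ¬(j = i ∨ j = i - 2 ∨ j = i + 2) → ¬ G.Adj x (v j) :=
    fun hx j hj hxj => by rw [hF] at hx; exact hj ((hx.2 j).1 hxj)
  have off : ∀ {i x}, x ∈ F i → ∀ j, x ≠ v j :=
    fun hx j hxj => by rw [hF] at hx; exact hx.1 ⟨j, hxj.symm⟩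
  have two_apart := @not_adj_of_adj_cycle_two_apart _ _ hD _ hC5 hv
  have consecutive := @not_adj_of_adj_cycle_consecutive _ _ hD _ hC5
  have same : ∀ i, ∀ x ∈ F i, ∀ y ∈ F i, ¬ G.Adj x y := fun i x hx y hy =>
    two_apart (i := i) (adj hx (by omega)) (adj hx (by omega)) (adj hy (by omega))
      (adj hy (by omega))
  refine ⟨fun i x hx y hy => ?_, fun i j x hx y hy => ?_⟩
  · by_contra hxy
    exact same i x hx y hy <| adj_of_adj_cycle_consecutive hD hC5 (i := i + 2) hxy
      (adj hx (by omega)) (adj hx (by omega)) (adj hy (by omega)) (adj hy (by omega))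
  obtain rfl | rfl | rfl | rfl | rfl : j = i ∨ j = i + 1 ∨ j = i + 2 ∨ j = i + 3 ∨ j = i + 4 := by
    omega
  · exact same j x hx y hy
  · exact consecutive (i := i + 2) (off hy _) (adj hx (by omega)) (adj hx (by omega))
      (nadj hy (by omega)) (adj hy (by omega))
  · exact two_apart (i := i) (adj hx (by omega)) (adj hx (by omega)) (adj hy (by omega))
      (adj hy (by omega))
  · exact two_apart (i := i + 3) (adj hx (by omega)) (adj hx (by omega)) (adj hy (by omega))
      (adj hy (by omega))
  · exact fun hxy => consecutive (i := i + 1) (off hx _) (adj hy (by omega)) (adj hy (by omega))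
      (nadj hx (by omega)) (adj hx (by omega)) hxy.symm
end

section
/- Let G be a diamond-free graph containing an induced 5-cycle v1v2v3v4v5, with F_i the set of vertices outside the cycle adjacent on the cycle exactly to v_i, v_{i-2}, v_{i+2}, and A_j the vertices adjacent only to v_j. Then F_i is anti-complete to A_{i+2} ∪ A_{i+3} (indices mod 5). -/
open SimpleGraph

namespace SimpleGraph

variable {V : Type*} {G : SimpleGraph V}

theorem adj_of_adj_both_ends_of_diamond_free (hD : ¬ Nonempty (diamond ↪g G)) {a b c d : V}
    (hab : a ≠ b) (hcd : G.Adj c d) (hac : G.Adj a c) (had : G.Adj a d) (hbc : G.Adj b c)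
    (hbd : G.Adj b d) : G.Adj a b := by
  by_contra hnab
  have hnba : ¬ G.Adj b a := fun h => hnab h.symm
  have hinj : Function.Injective ![a, b, c, d] := fun x y hxy => by
    fin_cases x <;> fin_cases y <;> simp_all [G.ne_of_adj, (G.ne_of_adj _).symm]
  refine hD ⟨⟨⟨_, hinj⟩, fun {x y} => ?_⟩⟩
  change G.Adj (![a, b, c, d] x) (![a, b, c, d] y) ↔ diamond.Adj x y
  fin_cases x <;> fin_cases y <;> simp [diamond, *, hcd.symm, hac.symm, had.symm, hbc.symm,
    hbd.symm]

end SimpleGraph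

theorem stmt_13_general {V : Type*} (G : SimpleGraph V)
    (hD : ¬ Nonempty (diamond ↪g G))
    (v : Fin 5 → V)
    (hC5 : ∀ i j, G.Adj (v i) (v j) ↔ j = i + 1 ∨ i = j + 1)
    (A : Fin 5 → Set V)
    (hA : ∀ i, A i = {u | u ∉ Set.range v ∧ ∀ j, G.Adj u (v j) ↔ j = i})
    (F : Fin 5 → Set V)
    (hF : ∀ i, F i = {u | u ∉ Set.range v ∧ ∀ j, G.Adj u (v j) ↔ (j = i ∨ j = i - 2 ∨ j = i + 2)}) :
    ∀ i, ∀ f ∈ F i, ∀ a ∈ A (i + 2) ∪ A (i + 3), ¬ G.Adj f a := by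
  intro i f hf a ha hfa
  rw [hF] at hf
  have hf2 : G.Adj f (v (i + 2)) := (hf.2 _).2 (by simp)
  have hf3 : G.Adj f (v (i + 3)) := (hf.2 _).2 (by simp [show i + 3 = i - 2 by fin_omega])
  have h23 : G.Adj (v (i + 2)) (v (i + 3)) := (hC5 _ _).2 (by simp [add_assoc])
  -- `v k` and `a` are distinct common neighbours of the edge `f (v j)`, but `a ∈ A j` misses `v k`.
  have not_mem_A : ∀ j k, G.Adj (v j) (v k) → G.Adj f (v j) → G.Adj f (v k) → k ≠ j → a ∉ A j := by
    intro j k hjk hfj hfk hkj haj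
    rw [hA] at haj
    have hak : G.Adj a (v k) := adj_of_adj_both_ends_of_diamond_free hD
      (fun h => haj.1 ⟨k, h.symm⟩) hfj hfa.symm ((haj.2 j).2 rfl) hfk.symm hjk.symm
    exact hkj ((haj.2 k).1 hak)
  rcases ha with ha | ha
  · exact not_mem_A _ _ h23 hf2 hf3 (by simp) ha
  · exact not_mem_A _ _ h23.symm hf3 hf2 (by simp) ha

theorem stmt_13 {V : Type*} (G : SimpleGraph V)
    (hD : ¬ Nonempty (diamond ↪g G))
    (v : Fin 5 → V) (hv : Function.Injective v)
    (hC5 : ∀ i j, G.Adj (v i) (v j) ↔ j = i + 1 ∨ i = j + 1)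
    (A : Fin 5 → Set V)
    (hA : ∀ i, A i = {u | u ∉ Set.range v ∧ ∀ j, G.Adj u (v j) ↔ j = i})
    (F : Fin 5 → Set V)
    (hF : ∀ i, F i = {u | u ∉ Set.range v ∧ ∀ j, G.Adj u (v j) ↔ (j = i ∨ j = i - 2 ∨ j = i + 2)}) :
    ∀ i, ∀ f ∈ F i, ∀ a ∈ A (i + 2) ∪ A (i + 3), ¬ G.Adj f a :=
  stmt_13_general G hD v hC5 A hA F hF
end

section
/- Let G be a diamond-free graph containing an induced 5-cycle v1v2v3v4v5, with F_i the vertices adjacent exactly to v_i, v_{i-2}, v_{i+2} on the cycle and C_{j,j+2} the vertices adjacent exactly to v_j, v_{j+2}. If j ≠ i-1 (mod 5), then F_i is anti-complete to C_{j,j+2}. -/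
/-!
In a diamond-free graph two distinct common neighbours of an edge are adjacent. Suppose
`f ∈ F i` and `c ∈ C j` are adjacent, with `j ∈ {i, i+1, i+2, i+3}`. If `j = i` or `j = i + 3`,
the two cycle neighbours `v j`, `v (j+2)` of `c` are also neighbours of `f`, so the edge `fc`
forces the chord `v j v (j+2)`. If `j = i + 1` or `j = i + 2`, the edge from `f` to one end of the
cycle edge `v (i+2) v (i+3)` has `c` and the other end as common neighbours, forcing an edge
from `c` to a cycle vertex outside its neighbourhood.
-/

open SimpleGraph

namespace SimpleGraph

variable {V : Type*} {G : SimpleGraph V}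

theorem diamond_isIndContained {a b x y : V} (hab : a ≠ b) (hnab : ¬ G.Adj a b)
    (hxy : G.Adj x y) (hax : G.Adj a x) (hay : G.Adj a y) (hbx : G.Adj b x)
    (hby : G.Adj b y) : diamond ⊴ G := by
  refine ⟨⟨⟨![a, b, x, y], fun p q h => ?_⟩, fun {p q} => ?_⟩⟩
  · fin_cases p <;> fin_cases q <;>
      simp_all [hax.ne, hay.ne, hbx.ne, hby.ne, hxy.ne, hab.symm, hax.ne.symm, hay.ne.symm,
        hbx.ne.symm, hby.ne.symm, hxy.ne.symm]
  · show G.Adj (![a, b, x, y] p) (![a, b, x, y] q) ↔ diamond.Adj p q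
    fin_cases p <;> fin_cases q <;>
      simp [diamond, hax, hay, hbx, hby, hxy, hax.symm, hay.symm, hbx.symm, hby.symm, hxy.symm,
        hnab, mt Adj.symm hnab]

theorem Adj.adj_of_mem_commonNeighbors (hD : ¬ diamond ⊴ G) {x y a b : V} (hxy : G.Adj x y)
    (ha : a ∈ G.commonNeighbors x y) (hb : b ∈ G.commonNeighbors x y) (hab : a ≠ b) :
    G.Adj a b := by
  rw [mem_commonNeighbors] at ha hb
  by_contra hnab
  exact hD (diamond_isIndContained hab hnab hxy ha.1.symm ha.2.symm hb.1.symm hb.2.symm)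

end SimpleGraph

theorem stmt_15 {V : Type*} (G : SimpleGraph V)
    (hD : ¬ Nonempty (diamond ↪g G))
    (v : Fin 5 → V) (hv : Function.Injective v)
    (hC5 : ∀ i j, G.Adj (v i) (v j) ↔ j = i + 1 ∨ i = j + 1)
    (C : Fin 5 → Set V)
    (hC : ∀ i, C i = {u | u ∉ Set.range v ∧ ∀ j, G.Adj u (v j) ↔ (j = i ∨ j = i + 2)})
    (F : Fin 5 → Set V)
    (hF : ∀ i, F i = {u | u ∉ Set.range v ∧ ∀ j, G.Adj u (v j) ↔ (j = i ∨ j = i - 2 ∨ j = i + 2)}) :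
    ∀ i j, j ≠ i - 1 → ∀ f ∈ F i, ∀ c ∈ C j, ¬ G.Adj f c := by
  intro i j hij f hf c hc hfc
  rw [hF] at hf
  rw [hC] at hc
  obtain ⟨-, hfv⟩ := hf
  obtain ⟨hc_range, hcv⟩ := hc
  have hc_ne (k : Fin 5) : c ≠ v k := fun h => hc_range ⟨k, h.symm⟩
  obtain h | h | h | h : j = i ∨ j = i + 1 ∨ j = i + 2 ∨ j = i + 3 := by omega
  · have := hfc.adj_of_mem_commonNeighbors hD
      ⟨(hfv i).2 (by omega), (hcv i).2 (by omega)⟩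
      ⟨(hfv (i + 2)).2 (by omega), (hcv (i + 2)).2 (by omega)⟩ (hv.ne (by omega))
    exact absurd ((hC5 _ _).1 this) (by omega)
  · have := ((hfv (i + 3)).2 (by omega)).adj_of_mem_commonNeighbors hD
      ⟨hfc, ((hcv (i + 3)).2 (by omega)).symm⟩
      ⟨(hfv (i + 2)).2 (by omega), (hC5 _ _).2 (by omega)⟩ (hc_ne (i + 2))
    exact absurd ((hcv _).1 this) (by omega)
  · have := ((hfv (i + 2)).2 (by omega)).adj_of_mem_commonNeighbors hD
      ⟨hfc, ((hcv (i + 2)).2 (by omega)).symm⟩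
      ⟨(hfv (i + 3)).2 (by omega), (hC5 _ _).2 (by omega)⟩ (hc_ne (i + 3))
    exact absurd ((hcv _).1 this) (by omega)
  · have := hfc.adj_of_mem_commonNeighbors hD
      ⟨(hfv i).2 (by omega), (hcv i).2 (by omega)⟩
      ⟨(hfv (i + 3)).2 (by omega), (hcv (i + 3)).2 (by omega)⟩ (hv.ne (by omega))
    exact absurd ((hC5 _ _).1 this) (by omega)
end

section
/- Let G be a (P6, diamond)-free graph containing an induced 5-cycle v1v2v3v4v5. If the set A_i (vertices outside the cycle adjacent only to v_i) contains an edge, then A_{i+2}, A_{i+3}, B_{i+1,i+2}, and B_{i-1,i-2} are all empty, where B_{j,j+1} is the set of vertices adjacent exactly to v_j and v_{j+1} on the cycle (indices mod 5). -/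
/-!
Let `a₁a₂` be an edge all of whose ends see exactly `v₀` on the cycle, and let `x` see `v₂` but
none of `v₀, v₃, v₄`. If `x` saw both `a₁` and `a₂`, then `v₀, x, a₁, a₂` would span a diamond; so
some `aₖ` misses `x`, and `aₖ v₀ v₄ v₃ v₂ x` is an induced `P₆`. After rotating or reflecting the
cycle, every vertex of `A (i+2)`, `A (i+3)`, `B (i+1)`, `B (i-2)` is such an `x`.
-/

open SimpleGraph

namespace SimpleGraph

variable {V W : Type*} {G : SimpleGraph V} {H : SimpleGraph W}

lemma nonempty_embedding_of_adj_iff (f : W → V) (hf : ∀ i j, G.Adj (f i) (f j) ↔ H.Adj i j)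
    (htwin : ∀ i j, f i = f j → (∀ k, H.Adj i k ↔ H.Adj j k) → i = j) :
    Nonempty (H ↪g G) :=
  ⟨⟨⟨f, fun i j hij => htwin i j hij fun k => by rw [← hf, ← hf, hij]⟩, hf _ _⟩⟩

lemma pathGraph_six_eq_of_neighbors {i j : Fin 6}
    (h : ∀ k, (pathGraph 6).Adj i k ↔ (pathGraph 6).Adj j k) : i = j := by
  simp only [pathGraph_adj] at h
  revert i j; decide

lemma adj_of_diamond_free (hD : ¬ Nonempty (diamond ↪g G)) {a b c d : V} (hne : a ≠ b)
    (hcd : G.Adj c d) (hac : G.Adj a c) (had : G.Adj a d) (hbc : G.Adj b c) (hbd : G.Adj b d) :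
    G.Adj a b := by
  by_contra hab
  have hba : ¬ G.Adj b a := fun h => hab h.symm
  refine hD (nonempty_embedding_of_adj_iff ![a, b, c, d] ?_ ?_)
  · intro i j
    fin_cases i <;> fin_cases j <;>
      simp [diamond, hab, hba, hac, had, hbc, hbd, hcd, hac.symm, had.symm, hbc.symm, hbd.symm,
        hcd.symm]
  · intro i j hij htwin
    fin_cases i <;> fin_cases j <;> simp_all [diamond]

def IsInducedFiveCycle (G : SimpleGraph V) (v : Fin 5 → V) : Prop :=
  ∀ i j, G.Adj (v i) (v j) ↔ j = i + 1 ∨ i = j + 1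

namespace IsInducedFiveCycle

variable {v : Fin 5 → V}

lemma rotate (hv : IsInducedFiveCycle G v) (k : Fin 5) :
    IsInducedFiveCycle G (fun j => v (k + j)) := by
  intro i j
  rw [hv]
  revert k i j
  decide

lemma reflect (hv : IsInducedFiveCycle G v) (k : Fin 5) :
    IsInducedFiveCycle G (fun j => v (k - j)) := by
  intro i j
  rw [hv]
  revert k i j
  decide

lemma nonempty_pathGraph_six_embedding (hv : IsInducedFiveCycle G v) {a x : V}
    (ha : ∀ j, G.Adj a (v j) ↔ j = 0) (hx : ∀ j, j ≠ 1 → (G.Adj x (v j) ↔ j = 2))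
    (hax : ¬ G.Adj a x) : Nonempty (pathGraph 6 ↪g G) := by
  have ha' : ∀ j, G.Adj (v j) a ↔ j = 0 := fun j => (G.adj_comm _ _).trans (ha j)
  have hx' : ∀ j, j ≠ 1 → (G.Adj (v j) x ↔ j = 2) := fun j hj =>
    (G.adj_comm _ _).trans (hx j hj)
  have hxa : ¬ G.Adj x a := fun h => hax h.symm
  refine nonempty_embedding_of_adj_iff ![a, v 0, v 4, v 3, v 2, x] (fun p q => ?_)
    fun _ _ _ => pathGraph_six_eq_of_neighbors
  fin_cases p <;> fin_cases q <;> simp [pathGraph_adj, hv _ _, ha, ha', hx, hx', hax, hxa]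

lemma false_of_edge_at_zero (hP6 : ¬ Nonempty (pathGraph 6 ↪g G))
    (hD : ¬ Nonempty (diamond ↪g G)) (hv : IsInducedFiveCycle G v) {a₁ a₂ x : V}
    (ha₁ : ∀ j, G.Adj a₁ (v j) ↔ j = 0) (ha₂ : ∀ j, G.Adj a₂ (v j) ↔ j = 0)
    (h₁₂ : G.Adj a₁ a₂) (hx : ∀ j, j ≠ 1 → (G.Adj x (v j) ↔ j = 2)) : False := by
  have hx₀ : ¬ G.Adj x (v 0) := by simp [hx 0 (by decide)]
  have hxv₀ : x ≠ v 0 := by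
    rintro rfl
    simpa [hv 0 2] using hx 2 (by decide)
  obtain ⟨a, ha, hax⟩ : ∃ a, (∀ j, G.Adj a (v j) ↔ j = 0) ∧ ¬ G.Adj a x := by
    by_contra! h
    exact hx₀ <| adj_of_diamond_free hD hxv₀ h₁₂ (h a₁ ha₁).symm (h a₂ ha₂).symm
      ((ha₁ 0).2 rfl).symm ((ha₂ 0).2 rfl).symm
  exact hP6 (hv.nonempty_pathGraph_six_embedding ha hx hax)

end IsInducedFiveCycle

end SimpleGraph

theorem stmt_16_general {V : Type*} (G : SimpleGraph V)
    (hP6 : ¬ Nonempty (pathGraph 6 ↪g G))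
    (hD : ¬ Nonempty (diamond ↪g G))
    (v : Fin 5 → V)
    (hC5 : ∀ i j, G.Adj (v i) (v j) ↔ j = i + 1 ∨ i = j + 1)
    (A : Fin 5 → Set V)
    (hA : ∀ i, A i = {u | u ∉ Set.range v ∧ ∀ j, G.Adj u (v j) ↔ j = i})
    (B : Fin 5 → Set V)
    (hB : ∀ i, B i = {u | u ∉ Set.range v ∧ ∀ j, G.Adj u (v j) ↔ (j = i ∨ j = i + 1)}) :
    ∀ i, (∃ a₁ ∈ A i, ∃ a₂ ∈ A i, G.Adj a₁ a₂) →
      A (i + 2) = ∅ ∧ A (i + 3) = ∅ ∧ B (i + 1) = ∅ ∧ B (i - 2) = ∅ := by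
  intro i
  simp only [hA, hB, Set.eq_empty_iff_forall_notMem]
  rintro ⟨a₁, ⟨-, ha₁⟩, a₂, ⟨-, ha₂⟩, h₁₂⟩
  have hv : IsInducedFiveCycle G v := hC5
  have rotate := fun x => hv.rotate i |>.false_of_edge_at_zero (x := x) hP6 hD
    (fun j => (ha₁ _).trans (by simp)) (fun j => (ha₂ _).trans (by simp)) h₁₂
  have reflect := fun x => hv.reflect i |>.false_of_edge_at_zero (x := x) hP6 hD
    (fun j => (ha₁ _).trans (by simp)) (fun j => (ha₂ _).trans (by simp)) h₁₂
  refine ⟨?_, ?_, ?_, ?_⟩ <;> rintro x ⟨-, hx⟩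
  · exact rotate x fun j _ => (hx _).trans (by simp)
  · exact reflect x fun j _ => (hx _).trans (by grind)
  · exact rotate x fun j hj => (hx _).trans (by grind)
  · exact reflect x fun j hj => (hx _).trans (by grind)

theorem stmt_16 {V : Type*} (G : SimpleGraph V)
    (hP6 : ¬ Nonempty (pathGraph 6 ↪g G))
    (hD : ¬ Nonempty (diamond ↪g G))
    (v : Fin 5 → V) (hv : Function.Injective v)
    (hC5 : ∀ i j, G.Adj (v i) (v j) ↔ j = i + 1 ∨ i = j + 1)
    (A : Fin 5 → Set V)
    (hA : ∀ i, A i = {u | u ∉ Set.range v ∧ ∀ j, G.Adj u (v j) ↔ j = i})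
    (B : Fin 5 → Set V)
    (hB : ∀ i, B i = {u | u ∉ Set.range v ∧ ∀ j, G.Adj u (v j) ↔ (j = i ∨ j = i + 1)}) :
    ∀ i, (∃ a₁ ∈ A i, ∃ a₂ ∈ A i, G.Adj a₁ a₂) →
      A (i + 2) = ∅ ∧ A (i + 3) = ∅ ∧ B (i + 1) = ∅ ∧ B (i - 2) = ∅ :=
  stmt_16_general G hP6 hD v hC5 A hA B hB
end

section
/- Let G be a P6-free graph containing an induced 5-cycle v1v2v3v4v5, and let Z be the set of vertices with no neighbour on the cycle. Then Z is anti-complete to A ∪ B, where A is the set of vertices with exactly one neighbour on the cycle and B is the set of vertices whose neighbourhood on the cycle is exactly a pair of consecutive cycle vertices. -/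
open SimpleGraph

set_option maxHeartbeats 1000000 in
theorem stmt_17 {V : Type*} (G : SimpleGraph V)
    (hP6 : ¬ Nonempty (pathGraph 6 ↪g G))
    (v : Fin 5 → V) (hv : Function.Injective v)
    (hC5 : ∀ i j, G.Adj (v i) (v j) ↔ j = i + 1 ∨ i = j + 1)
    (Z A B : Set V)
    (hZ : Z = {u | ∀ j, ¬ G.Adj u (v j)})
    (hA : A = {u | ∃! j, G.Adj u (v j)})
    (hB : B = {u | ∃ i, ∀ j, G.Adj u (v j) ↔ (j = i ∨ j = i + 1)}) :
    ∀ z ∈ Z, ∀ x ∈ A ∪ B, ¬ G.Adj z x := by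
  subst hZ hA hB
  rintro z hz x hx hzx
  have FA : ∀ j : Fin 5, j+1 ≠ j ∧ j+2 ≠ j ∧ j+3 ≠ j := by decide
  have Feq : ∀ j : Fin 5, j+1+1 = j+2 ∧ j+2+1 = j+3 := by decide
  have FB : ∀ i : Fin 5, ¬(i+1+1 = i ∨ i+1+1 = i+1) ∧ ¬(i+1+2 = i ∨ i+1+2 = i+1)
      ∧ ¬(i+1+3 = i ∨ i+1+3 = i+1) := by decide
  have FV : ∀ j : Fin 5, ¬(j+2 = j+1 ∨ j = j+2+1) ∧ ¬(j+3 = j+1 ∨ j = j+3+1)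
      ∧ ¬(j+3 = j+1+1 ∨ j+1 = j+3+1) ∧ j ≠ j+1 ∧ j ≠ j+2 ∧ j ≠ j+3
      ∧ j+1 ≠ j+2 ∧ j+1 ≠ j+3 ∧ j+2 ≠ j+3 := by decide
  obtain ⟨j, hx0, hx1, hx2, hx3⟩ :
      ∃ j, G.Adj x (v j) ∧ ¬G.Adj x (v (j+1)) ∧ ¬G.Adj x (v (j+2)) ∧ ¬G.Adj x (v (j+3)) := by
    cases hx with
    | inl h =>
      obtain ⟨j, hadj, huniq⟩ := h
      exact ⟨j, hadj, fun h => (FA j).1 (huniq _ h), fun h => (FA j).2.1 (huniq _ h),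
        fun h => (FA j).2.2 (huniq _ h)⟩
    | inr h =>
      obtain ⟨i, hi⟩ := h
      exact ⟨i+1, (hi _).2 (Or.inr rfl), fun h => (FB i).1 ((hi _).1 h),
        fun h => (FB i).2.1 ((hi _).1 h), fun h => (FB i).2.2 ((hi _).1 h)⟩
  have e1 : G.Adj (v j) (v (j+1)) := (hC5 _ _).2 (Or.inl rfl)
  have e2 : G.Adj (v (j+1)) (v (j+2)) := (hC5 _ _).2 (Or.inl (Feq j).1.symm)
  have e3 : G.Adj (v (j+2)) (v (j+3)) := (hC5 _ _).2 (Or.inl (Feq j).2.symm)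
  have n1 : ¬G.Adj (v j) (v (j+2)) := fun h => (FV j).1 ((hC5 _ _).1 h)
  have n2 : ¬G.Adj (v j) (v (j+3)) := fun h => (FV j).2.1 ((hC5 _ _).1 h)
  have n3 : ¬G.Adj (v (j+1)) (v (j+3)) := fun h => (FV j).2.2.1 ((hC5 _ _).1 h)
  have hzv : ∀ k, z ≠ v k := fun k h => hz (k+1) (by rw [h]; exact (hC5 _ _).2 (Or.inl rfl))
  have hvz : ∀ k, v k ≠ z := fun k => (hzv k).symm
  have hzv0 : z ≠ v j := hzv j
  have hzv1 : z ≠ v (j+1) := hzv _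
  have hzv2 : z ≠ v (j+2) := hzv _
  have hzv3 : z ≠ v (j+3) := hzv _
  have hvz0 : v j ≠ z := hvz j
  have hvz1 : v (j+1) ≠ z := hvz _
  have hvz2 : v (j+2) ≠ z := hvz _
  have hvz3 : v (j+3) ≠ z := hvz _
  have hz0 : ¬ G.Adj z (v j) := hz j
  have hz1 : ¬ G.Adj z (v (j+1)) := hz _
  have hz2 : ¬ G.Adj z (v (j+2)) := hz _
  have hz3 : ¬ G.Adj z (v (j+3)) := hz _
  have hz0' : ¬ G.Adj (v j) z := fun h => hz0 h.symm
  have hz1' : ¬ G.Adj (v (j+1)) z := fun h => hz1 h.symm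
  have hz2' : ¬ G.Adj (v (j+2)) z := fun h => hz2 h.symm
  have hz3' : ¬ G.Adj (v (j+3)) z := fun h => hz3 h.symm
  have hxv0 : x ≠ v j := fun h => hx1 (by rw [h]; exact e1)
  have hxv1 : x ≠ v (j+1) := fun h => hx2 (by rw [h]; exact e2)
  have hxv2 : x ≠ v (j+2) := fun h => hx3 (by rw [h]; exact e3)
  have hxv3 : x ≠ v (j+3) := fun h => hx2 (by rw [h]; exact e3.symm)
  have vv01 : v j ≠ v (j+1) := fun h => (FV j).2.2.2.1 (hv h)
  have vv02 : v j ≠ v (j+2) := fun h => (FV j).2.2.2.2.1 (hv h)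
  have vv03 : v j ≠ v (j+3) := fun h => (FV j).2.2.2.2.2.1 (hv h)
  have vv12 : v (j+1) ≠ v (j+2) := fun h => (FV j).2.2.2.2.2.2.1 (hv h)
  have vv13 : v (j+1) ≠ v (j+3) := fun h => (FV j).2.2.2.2.2.2.2.1 (hv h)
  have vv23 : v (j+2) ≠ v (j+3) := fun h => (FV j).2.2.2.2.2.2.2.2 (hv h)
  have hzxne : z ≠ x := hzx.ne
  have hx0' : G.Adj (v j) x := hx0.symm
  have hzx' : G.Adj x z := hzx.symm
  have e1' : G.Adj (v (j+1)) (v j) := e1.symm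
  have e2' : G.Adj (v (j+2)) (v (j+1)) := e2.symm
  have e3' : G.Adj (v (j+3)) (v (j+2)) := e3.symm
  have hx1' : ¬ G.Adj (v (j+1)) x := fun h => hx1 h.symm
  have hx2' : ¬ G.Adj (v (j+2)) x := fun h => hx2 h.symm
  have hx3' : ¬ G.Adj (v (j+3)) x := fun h => hx3 h.symm
  have n1' : ¬G.Adj (v (j+2)) (v j) := fun h => n1 h.symm
  have n2' : ¬G.Adj (v (j+3)) (v j) := fun h => n2 h.symm
  have n3' : ¬G.Adj (v (j+3)) (v (j+1)) := fun h => n3 h.symm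
  apply hP6
  refine ⟨⟨fun i : Fin 6 =>
      if i.val = 0 then z else if i.val = 1 then x else if i.val = 2 then v j
      else if i.val = 3 then v (j+1) else if i.val = 4 then v (j+2) else v (j+3), ?_⟩, ?_⟩
  · intro a b hab
    fin_cases a <;> fin_cases b <;>
      simp only [Fin.val_mk, Fin.isValue] at hab <;> norm_num at hab <;>
      first
      | rfl
      | exact absurd hab (by assumption)
      | exact absurd hab.symm (by assumption)
  · intro a b
    fin_cases a <;> fin_cases b <;>
      simp only [Function.Embedding.coeFn_mk, Fin.val_mk, Fin.isValue, pathGraph_adj] <;>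
      norm_num <;>
      first
      | assumption
      | exact G.irrefl
end

section
/- Let G be a (P6, diamond)-free graph containing an induced 5-cycle v1v2v3v4v5. Let C be the set of vertices outside the cycle whose neighbourhood on the cycle is exactly {v_i, v_{i+2}} for some i, and F the set of vertices whose neighbourhood on the cycle is exactly {v_i, v_{i-2}, v_{i+2}} for some i. Then the subgraph of G induced by C ∪ F is triangle-free. -/
open SimpleGraph

lemma mk_diamond {V : Type*} (G : SimpleGraph V) (x y z w : V)
    (hxy : ¬ G.Adj x y) (hxy' : x ≠ y) (hzw : G.Adj z w)
    (hxz : G.Adj x z) (hxw : G.Adj x w) (hyz : G.Adj y z) (hyw : G.Adj y w) :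
    Nonempty (diamond ↪g G) := by
  have hxz' := hxz.ne
  have hxw' := hxw.ne
  have hyz' := hyz.ne
  have hyw' := hyw.ne
  have hzw' := hzw.ne
  refine ⟨⟨⟨![x, y, z, w], ?_⟩, ?_⟩⟩
  · intro i j h
    fin_cases i <;> fin_cases j <;> simp_all
  · intro i j
    fin_cases i <;> fin_cases j <;>
      simp [diamond, Sym2.eq, Sym2.rel_iff'] <;>
      first
        | exact hxy
        | exact fun h => hxy h.symm
        | exact hxz
        | exact hxz.symm
        | exact hxw
        | exact hxw.symm
        | exact hyz
        | exact hyz.symm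
        | exact hyw
        | exact hyw.symm
        | exact hzw
        | exact hzw.symm

lemma key {N : Fin 5 → Prop}
    (h : (∃ k, ∀ j, N j ↔ j = k ∨ j = k + 2) ∨
         (∃ k, ∀ j, N j ↔ j = k ∨ j = k - 2 ∨ j = k + 2)) :
    (∃ i, N i ∧ N (i + 2)) ∧
    (∀ j, N j → N (j + 2) ∨ N (j + 3)) ∧
    (∀ i, ¬ N i → ¬ N (i + 2) → N (i + 1)) ∧
    (∀ i, N i → N (i + 2) → ¬ N (i + 1)) := by
  rcases h with ⟨k, hk⟩ | ⟨k, hk⟩ <;>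
    refine ⟨⟨k, ?_, ?_⟩, fun j hj => ?_, fun i h1 h2 => ?_, fun i h1 h2 => ?_⟩ <;>
    simp only [hk] at * <;> clear hk <;>
    first
      | (revert k; decide)
      | (revert j hj; revert k; decide)
      | (revert i h1 h2; revert k; decide)

theorem stmt_18 {V : Type*} (G : SimpleGraph V)
    (hP6 : ¬ Nonempty (pathGraph 6 ↪g G))
    (hD : ¬ Nonempty (diamond ↪g G))
    (v : Fin 5 → V) (hv : Function.Injective v)
    (hC5 : ∀ i j, G.Adj (v i) (v j) ↔ j = i + 1 ∨ i = j + 1)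
    (S : Set V)
    (hS : S = {u | u ∉ Set.range v ∧
      ((∃ i, ∀ j, G.Adj u (v j) ↔ (j = i ∨ j = i + 2)) ∨
       (∃ i, ∀ j, G.Adj u (v j) ↔ (j = i ∨ j = i - 2 ∨ j = i + 2)))}) :
    (G.induce S).CliqueFree 3 := by
  classical
  rintro t ⟨hcl, hcard⟩
  obtain ⟨a, b, c, hab, hac, hbc, rfl⟩ := Finset.card_eq_three.mp hcard
  have Hab : G.Adj a b := hcl (by simp) (by simp) hab
  have Hac : G.Adj a c := hcl (by simp) (by simp) hac
  have Hbc : G.Adj b c := hcl (by simp) (by simp) hbc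
  obtain ⟨a, haS⟩ := a
  obtain ⟨b, hbS⟩ := b
  obtain ⟨c, hcS⟩ := c
  simp only [Subtype.coe_mk] at Hab Hac Hbc
  rw [hS] at haS hbS hcS
  obtain ⟨haR, haN⟩ := haS
  obtain ⟨hbR, hbN⟩ := hbS
  obtain ⟨hcR, hcN⟩ := hcS
  obtain ⟨⟨i, hai, hai2⟩, Ka2, Ka3, Ka4⟩ := key haN
  obtain ⟨-, Kb2, Kb3, -⟩ := key hbN
  obtain ⟨-, Kc2, Kc3, -⟩ := key hcN
  -- diamond with two cycle vertices and an adjacent pair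
  have pure2 : ∀ j : Fin 5, ¬ (j + 2 = j + 1 ∨ j = j + 2 + 1) := by decide
  have pure3 : ∀ j : Fin 5, ¬ (j + 3 = j + 1 ∨ j = j + 3 + 1) := by decide
  have pne2 : ∀ j : Fin 5, j ≠ j + 2 := by decide
  have pne3 : ∀ j : Fin 5, j ≠ j + 3 := by decide
  have pairdia : ∀ (p q : V) (j jj : Fin 5), G.Adj p q → ¬ G.Adj (v j) (v jj) →
      j ≠ jj → G.Adj p (v j) → G.Adj q (v j) → G.Adj p (v jj) → G.Adj q (v jj) → False :=
    fun p q j jj hpq h1 h2 h3 h4 h5 h6 =>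
      hD (mk_diamond G (v j) (v jj) p q h1 (fun h => h2 (hv h)) hpq h3.symm h4.symm h5.symm h6.symm)
  -- Step B: some cycle vertex adjacent to all of a, b, c gives a contradiction
  have stepB : ∀ j : Fin 5, G.Adj a (v j) → G.Adj b (v j) → G.Adj c (v j) → False := by
    intro j haj hbj hcj
    have n2 : ¬ G.Adj (v j) (v (j + 2)) := fun h => pure2 j ((hC5 j (j + 2)).mp h)
    have n3 : ¬ G.Adj (v j) (v (j + 3)) := fun h => pure3 j ((hC5 j (j + 3)).mp h)
    have Fa := Ka2 j haj
    have Fb := Kb2 j hbj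
    have Fc := Kc2 j hcj
    have nAB2 : ¬ (G.Adj a (v (j+2)) ∧ G.Adj b (v (j+2))) :=
      fun ⟨h1, h2⟩ => pairdia a b j (j+2) Hab n2 (pne2 j) haj hbj h1 h2
    have nAC2 : ¬ (G.Adj a (v (j+2)) ∧ G.Adj c (v (j+2))) :=
      fun ⟨h1, h2⟩ => pairdia a c j (j+2) Hac n2 (pne2 j) haj hcj h1 h2
    have nBC2 : ¬ (G.Adj b (v (j+2)) ∧ G.Adj c (v (j+2))) :=
      fun ⟨h1, h2⟩ => pairdia b c j (j+2) Hbc n2 (pne2 j) hbj hcj h1 h2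
    have nAB3 : ¬ (G.Adj a (v (j+3)) ∧ G.Adj b (v (j+3))) :=
      fun ⟨h1, h2⟩ => pairdia a b j (j+3) Hab n3 (pne3 j) haj hbj h1 h2
    have nAC3 : ¬ (G.Adj a (v (j+3)) ∧ G.Adj c (v (j+3))) :=
      fun ⟨h1, h2⟩ => pairdia a c j (j+3) Hac n3 (pne3 j) haj hcj h1 h2
    have nBC3 : ¬ (G.Adj b (v (j+3)) ∧ G.Adj c (v (j+3))) :=
      fun ⟨h1, h2⟩ => pairdia b c j (j+3) Hbc n3 (pne3 j) hbj hcj h1 h2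
    rcases Fa with hA | hA <;> rcases Fb with hB | hB <;> rcases Fc with hC | hC <;>
      first
        | exact nAB2 ⟨hA, hB⟩
        | exact nAC2 ⟨hA, hC⟩
        | exact nBC2 ⟨hB, hC⟩
        | exact nAB3 ⟨hA, hB⟩
        | exact nAC3 ⟨hA, hC⟩
        | exact nBC3 ⟨hB, hC⟩
  -- diamond with one cycle vertex adjacent to p, q but not r
  have dia1 : ∀ (jj : Fin 5) (p q r : V), G.Adj p q → G.Adj p r → G.Adj q r →
      G.Adj p (v jj) → G.Adj q (v jj) → ¬ G.Adj r (v jj) → r ∉ Set.range v → False :=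
    fun jj p q r hpq hpr hqr hp hq hr hrR =>
      hD (mk_diamond G (v jj) r p q (fun h => hr h.symm) (fun h => hrR ⟨jj, h⟩)
        hpq hp.symm hq.symm hpr.symm hqr.symm)
  -- Step A
  by_cases hbi : G.Adj b (v i)
  · by_cases hci : G.Adj c (v i)
    · exact stepB i hai hbi hci
    · exact dia1 i a b c Hab Hac Hbc hai hbi hci hcR
  · by_cases hci : G.Adj c (v i)
    · exact dia1 i a c b Hac Hab Hbc.symm hai hci hbi hbR
    · by_cases hbi2 : G.Adj b (v (i + 2))
      · by_cases hci2 : G.Adj c (v (i + 2))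
        · exact stepB (i + 2) hai2 hbi2 hci2
        · exact dia1 (i + 2) a b c Hab Hac Hbc hai2 hbi2 hci2 hcR
      · by_cases hci2 : G.Adj c (v (i + 2))
        · exact dia1 (i + 2) a c b Hac Hab Hbc.symm hai2 hci2 hbi2 hbR
        · have hb1 := Kb3 i hbi hbi2
          have hc1 := Kc3 i hci hci2
          have ha1 := Ka4 i hai hai2
          exact hD (mk_diamond G a (v (i + 1)) b c ha1
            (fun h => haR ⟨i + 1, h.symm⟩) Hbc Hab Hac hb1.symm hc1.symm)
end
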